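/- Let A generate an exponentially stable C0-semigroup on a separable Hilbert space H, let C ∈ L(D(A),Y) be an admissible observation operator for A, and P ∈ L(D(A),H) an admissible observation operator for A such that A+P (with domain D(A)) generates an exponentially stable C0-semigroup S on H. If the map λ ↦ C R(λ,A) belongs to H²(L₂(H,Y)) on the right half-plane, and sup_{Re λ>0} ‖P R(λ, A+P)‖ < ∞, then λ ↦ C R(λ, A+P) also belongs to H²(L₂(H,Y)). -/

import Mathlib

open MeasureTheory Filter Set Topology ENNReal

/-- Squared Hilbert–Schmidt norm with respect to a Hilbert basis of `H`. -/
noncomputable def hsNormSq {H X : Type*} [NormedAddCommGroup H] [InnerProductSpace ℂ H]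
    [NormedAddCommGroup X] (e : HilbertBasis ℕ ℂ H) (f : H → X) : ℝ≥0∞ :=
  ∑' k, (‖f (e k)‖₊ : ℝ≥0∞) ^ 2

/-- The operator `C R(λ) : H → Y` for a resolvent family defined on the open right
half-plane (junk value `0` elsewhere). -/
noncomputable def CRes {H Y : Type*} [NormedAddCommGroup H] [InnerProductSpace ℂ H]
    [NormedAddCommGroup Y] [NormedSpace ℂ Y]
    (DA : Submodule ℂ H) (C : DA →ₗ[ℂ] Y) (R : ℂ → H →L[ℂ] H)
    (hmem : ∀ lam : ℂ, 0 < lam.re → ∀ x : H, R lam x ∈ DA) (lam : ℂ) (x : H) : Y :=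
  if h : 0 < lam.re then C ⟨R lam x, hmem lam h x⟩ else 0

/-- Membership in the Hardy space `H²(L₂(H,Y))` of an operator-valued function on the open
right half-plane: (strong) analyticity together with uniform square-integrability of the
Hilbert–Schmidt norms on vertical lines. -/
def MemH2HS {H Y : Type*} [NormedAddCommGroup H] [InnerProductSpace ℂ H]
    [NormedAddCommGroup Y] [NormedSpace ℂ Y] (e : HilbertBasis ℕ ℂ H) (G : ℂ → H → Y) : Prop :=
  (∀ x : H, DifferentiableOn ℂ (fun lam => G lam x) {lam : ℂ | 0 < lam.re}) ∧
  ∃ M : ℝ≥0∞, M < ⊤ ∧ ∀ a : ℝ, 0 < a →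
    (∫⁻ b : ℝ, hsNormSq e (G ((a : ℂ) + (b : ℂ) * Complex.I))) ≤ M

/-! On every vertical line, the perturbation formula `C R(λ,A+P) = C R(λ,A) (I + P R(λ,A+P))`
writes `C R(λ,A+P)` as the Hilbert–Schmidt operator `C R(λ,A)` followed by an operator of norm at
most `1 + sup ‖P R(·,A+P)‖`, and `‖T B‖_HS ≤ ‖B‖ ‖T‖_HS` (pass to adjoints and use `‖B†‖ = ‖B‖`);
this bounds the `H²` integrals. Analyticity comes from the resolvent identity
`R(λ) = R(μ) - (λ - μ) R(λ) R(μ)`, given that `C R(λ,A+P)` is locally bounded by the graph-norm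
bound on `C`. -/

open scoped InnerProductSpace

section HilbertSchmidt

variable {ι κ E F : Type*} [NormedAddCommGroup E] [InnerProductSpace ℂ E]
  [NormedAddCommGroup F] [InnerProductSpace ℂ F]

theorem HilbertBasis.hasSum_norm_inner_sq (b : HilbertBasis ι ℂ E) (x : E) :
    HasSum (fun i => ‖⟪b i, x⟫_ℂ‖ ^ 2) (‖x‖ ^ 2) := by
  simpa [b.repr_apply_apply, Real.rpow_two] using lp.hasSum_norm (p := 2) (by norm_num) (b.repr x)

theorem HilbertBasis.nnnorm_sq_eq_tsum (b : HilbertBasis ι ℂ E) (x : E) :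
    (‖x‖₊ : ℝ≥0∞) ^ 2 = ∑' i, (‖⟪b i, x⟫_ℂ‖₊ : ℝ≥0∞) ^ 2 := by
  have h : HasSum (fun i => ‖⟪b i, x⟫_ℂ‖₊ ^ 2) (‖x‖₊ ^ 2) :=
    NNReal.hasSum_coe.mp (by simpa using b.hasSum_norm_inner_sq x)
  exact_mod_cast (ENNReal.hasSum_coe.mpr h).tsum_eq.symm

theorem tsum_nnnorm_sq_apply_eq_adjoint [CompleteSpace E] [CompleteSpace F]
    (e : HilbertBasis ι ℂ E) (f : HilbertBasis κ ℂ F) (T : E →L[ℂ] F) :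
    ∑' i, (‖T (e i)‖₊ : ℝ≥0∞) ^ 2
      = ∑' j, (‖T.adjoint (f j)‖₊ : ℝ≥0∞) ^ 2 := by
  calc ∑' i, (‖T (e i)‖₊ : ℝ≥0∞) ^ 2
        = ∑' i, ∑' j, (‖⟪f j, T (e i)⟫_ℂ‖₊ : ℝ≥0∞) ^ 2 := by
        simp_rw [f.nnnorm_sq_eq_tsum]
    _ = ∑' j, ∑' i, (‖⟪e i, T.adjoint (f j)⟫_ℂ‖₊ : ℝ≥0∞) ^ 2 := by
        rw [ENNReal.tsum_comm]
        congr! 4 with j i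
        rw [← ContinuousLinearMap.adjoint_inner_left, ← inner_conj_symm, RCLike.nnnorm_conj]
    _ = ∑' j, (‖T.adjoint (f j)‖₊ : ℝ≥0∞) ^ 2 := by
        simp_rw [e.nnnorm_sq_eq_tsum]

theorem hsNormSq_comp_le [CompleteSpace E] [CompleteSpace F] (e : HilbertBasis ℕ ℂ E)
    (T : E →L[ℂ] F) (B : E →L[ℂ] E) :
    hsNormSq e (T ∘L B) ≤ (‖B‖₊ : ℝ≥0∞) ^ 2 * hsNormSq e T := by
  obtain ⟨w, f, -⟩ := exists_hilbertBasis ℂ F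
  rw [hsNormSq, hsNormSq, tsum_nnnorm_sq_apply_eq_adjoint e f,
    tsum_nnnorm_sq_apply_eq_adjoint e f, ← ENNReal.tsum_mul_left]
  refine ENNReal.tsum_le_tsum fun j => ?_
  rw [ContinuousLinearMap.adjoint_comp, ← mul_pow, ← ENNReal.coe_mul]
  gcongr
  calc ‖B.adjoint (T.adjoint (f j))‖₊ ≤ ‖B.adjoint‖₊ * ‖T.adjoint (f j)‖₊ :=
        B.adjoint.le_opNNNorm _
    _ = ‖B‖₊ * ‖T.adjoint (f j)‖₊ := by rw [LinearIsometryEquiv.nnnorm_map]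

end HilbertSchmidt

section ResolventIdentity

variable {E F : Type*} [NormedAddCommGroup E] [NormedSpace ℂ E] [NormedAddCommGroup F]
  [NormedSpace ℂ F]

theorem resolvent_apply_eq_sub_smul {D : Submodule ℂ E} {A : D →ₗ[ℂ] E}
    {R S : E →L[ℂ] E} {lam mu : ℂ} (hR : ∀ y : D, R (lam • (y : E) - A y) = y)
    {x : E} (hx : S x ∈ D)
    (hS : mu • S x - A ⟨S x, hx⟩ = x) :
    R x = S x - (lam - mu) • R (S x) := by
  have h : R (lam • S x - A ⟨S x, hx⟩) = S x := hR ⟨S x, hx⟩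
  rw [show lam • S x - A ⟨S x, hx⟩ = (lam - mu) • S x + x by
    linear_combination (norm := module) hS, map_add, map_smul] at h
  linear_combination (norm := module) h

theorem resolvent_perturbation_apply {D : Submodule ℂ E} {A P : D →ₗ[ℂ] E}
    {R S : E →L[ℂ] E} {lam : ℂ} (hR : ∀ y : D, R (lam • (y : E) - A y) = y)
    {x : E} (hx : S x ∈ D)
    (hS : lam • S x - (A ⟨S x, hx⟩ + P ⟨S x, hx⟩) = x) :
    R (x + P ⟨S x, hx⟩) = S x := by
  have h : R (lam • S x - A ⟨S x, hx⟩) = S x := hR ⟨S x, hx⟩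
  refine Eq.trans (congrArg R ?_) h
  linear_combination (norm := module) -hS

theorem eventually_norm_le_two_mul_of_resolvent_identity {R : ℂ → E →L[ℂ] E} {mu : ℂ}
    (hR : ∀ᶠ lam in 𝓝 mu, R lam = R mu - (lam - mu) • (R lam).comp (R mu)) :
    ∀ᶠ lam in 𝓝 mu, ‖R lam‖ ≤ 2 * ‖R mu‖ := by
  have hsmall : ∀ᶠ lam in 𝓝 mu, ‖lam - mu‖ * ‖R mu‖ < 1 / 2 := by
    have : Tendsto (fun lam => ‖lam - mu‖ * ‖R mu‖) (𝓝 mu) (𝓝 0) := by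
      simpa using ((tendsto_id (x := 𝓝 mu)).sub_const mu).norm.mul_const ‖R mu‖
    exact this.eventually_lt_const (by norm_num)
  filter_upwards [hR, hsmall] with lam hlam hs
  have h : ‖R lam‖ ≤ ‖R mu‖ + ‖lam - mu‖ * (‖R lam‖ * ‖R mu‖) := by
    calc ‖R lam‖ ≤ ‖R mu‖ + ‖(lam - mu) • (R lam).comp (R mu)‖ := by
          conv_lhs => rw [hlam]
          exact norm_sub_le _ _
      _ ≤ ‖R mu‖ + ‖lam - mu‖ * (‖R lam‖ * ‖R mu‖) := by
          rw [norm_smul]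
          gcongr
          exact (R lam).opNorm_comp_le (R mu)
  nlinarith [norm_nonneg (R lam)]

end ResolventIdentity

section ResolventDerivative

variable {E F : Type*} [NormedAddCommGroup E] [NormedAddCommGroup F] [NormedSpace ℂ F]
  {G : ℂ → E → F} {r : E → E} {mu : ℂ}

theorem continuousAt_of_resolvent_identity
    (hG : ∀ᶠ lam in 𝓝 mu, ∀ x, G lam x = G mu x - (lam - mu) • G lam (r x))
    (hbd : ∃ K, ∀ᶠ lam in 𝓝 mu, ∀ y, ‖G lam y‖ ≤ K * ‖y‖) (x : E) :
    ContinuousAt (fun lam => G lam x) mu := by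
  obtain ⟨K, hK⟩ := hbd
  rw [ContinuousAt, tendsto_iff_norm_sub_tendsto_zero]
  refine squeeze_zero' (.of_forall fun _ => norm_nonneg _) ?_
    (g := fun lam => ‖lam - mu‖ * (K * ‖r x‖)) ?_
  · filter_upwards [hG, hK] with lam hlam hKlam
    rw [hlam x, sub_sub_cancel_left, norm_neg, norm_smul]
    gcongr
    exact hKlam (r x)
  · simpa using ((tendsto_id (x := 𝓝 mu)).sub_const mu).norm.mul_const (K * ‖r x‖)

theorem hasDerivAt_of_resolvent_identity
    (hG : ∀ᶠ lam in 𝓝 mu, ∀ x, G lam x = G mu x - (lam - mu) • G lam (r x))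
    (hbd : ∃ K, ∀ᶠ lam in 𝓝 mu, ∀ y, ‖G lam y‖ ≤ K * ‖y‖) (x : E) :
    HasDerivAt (fun lam => G lam x) (-G mu (r x)) mu := by
  rw [hasDerivAt_iff_tendsto_slope]
  have hslope : ∀ᶠ lam in 𝓝[≠] mu, slope (fun lam => G lam x) mu lam = -G lam (r x) := by
    filter_upwards [nhdsWithin_le_nhds hG, self_mem_nhdsWithin] with lam hlam hne
    rw [slope_def_module, hlam x, sub_sub_cancel_left, smul_neg, smul_smul,
      inv_mul_cancel₀ (sub_ne_zero.mpr hne), one_smul]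
  rw [tendsto_congr' hslope]
  exact (continuousAt_of_resolvent_identity hG hbd (r x)).neg.tendsto.mono_left nhdsWithin_le_nhds

end ResolventDerivative

theorem eventually_re_pos {mu : ℂ} (hmu : 0 < mu.re) : ∀ᶠ lam in 𝓝 mu, 0 < lam.re :=
  continuousAt_const.eventually_lt Complex.continuous_re.continuousAt hmu

section CRes

variable {H Y : Type*} [NormedAddCommGroup H] [InnerProductSpace ℂ H] [NormedAddCommGroup Y]
  [NormedSpace ℂ Y] {DA : Submodule ℂ H} {A : DA →ₗ[ℂ] H} {C : DA →ₗ[ℂ] Y}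
  {R : ℂ → H →L[ℂ] H} {hmem : ∀ lam : ℂ, 0 < lam.re → ∀ x : H, R lam x ∈ DA}

section ResolventEquations

variable
  (hres : ∀ (lam : ℂ) (h : 0 < lam.re) (x : H),
    lam • R lam x - A ⟨R lam x, hmem lam h x⟩ = x)
  (hres2 : ∀ lam : ℂ, 0 < lam.re → ∀ x : DA, R lam (lam • (x : H) - A x) = (x : H))
include hres hres2

theorem resolvent_eq_sub_smul_comp {lam mu : ℂ} (hlam : 0 < lam.re) (hmu : 0 < mu.re) :
    R lam = R mu - (lam - mu) • (R lam).comp (R mu) := by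
  ext x
  exact resolvent_apply_eq_sub_smul (hres2 lam hlam) (hmem mu hmu x) (hres mu hmu x)

theorem cRes_eq_sub_smul {lam mu : ℂ} (hlam : 0 < lam.re) (hmu : 0 < mu.re) (x : H) :
    CRes DA C R hmem lam x
      = CRes DA C R hmem mu x - (lam - mu) • CRes DA C R hmem lam (R mu x) := by
  simp only [CRes, dif_pos hlam, dif_pos hmu, ← map_smul, ← map_sub]
  congr 1
  ext
  exact resolvent_apply_eq_sub_smul (hres2 lam hlam) (hmem mu hmu x) (hres mu hmu x)

theorem eventually_norm_resolvent_le {mu : ℂ} (hmu : 0 < mu.re) :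
    ∀ᶠ lam in 𝓝 mu, ‖R lam‖ ≤ 2 * ‖R mu‖ :=
  eventually_norm_le_two_mul_of_resolvent_identity <| (eventually_re_pos hmu).mono
    fun _ hlam => resolvent_eq_sub_smul_comp hres hres2 hlam hmu

theorem exists_eventually_norm_cRes_le {c M : ℝ} (hc : 0 ≤ c)
    (hbd : ∀ (lam : ℂ), 0 < lam.re → ∀ y,
      ‖CRes DA C R hmem lam y‖ ≤ c * ((1 + ‖lam‖) * ‖R lam‖ + M) * ‖y‖)
    {mu : ℂ} (hmu : 0 < mu.re) :
    ∃ K, ∀ᶠ lam in 𝓝 mu, ∀ y, ‖CRes DA C R hmem lam y‖ ≤ K * ‖y‖ := by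
  refine ⟨c * ((1 + (‖mu‖ + 1)) * (2 * ‖R mu‖) + M), ?_⟩
  have hnorm : ∀ᶠ lam in 𝓝 mu, ‖lam‖ < ‖mu‖ + 1 :=
    continuous_norm.continuousAt.eventually_lt continuousAt_const (lt_add_one _)
  filter_upwards [eventually_re_pos hmu, eventually_norm_resolvent_le hres hres2 hmu, hnorm]
    with lam hlam hR hlam_norm y
  refine (hbd lam hlam y).trans ?_
  gcongr

theorem differentiableOn_cRes {c M : ℝ} (hc : 0 ≤ c)
    (hbd : ∀ (lam : ℂ), 0 < lam.re → ∀ y,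
      ‖CRes DA C R hmem lam y‖ ≤ c * ((1 + ‖lam‖) * ‖R lam‖ + M) * ‖y‖) (x : H) :
    DifferentiableOn ℂ (fun lam => CRes DA C R hmem lam x) {lam : ℂ | 0 < lam.re} :=
  fun _ hmu => (hasDerivAt_of_resolvent_identity
    ((eventually_re_pos hmu).mono fun _ hlam => cRes_eq_sub_smul hres hres2 hlam hmu)
    (exists_eventually_norm_cRes_le hres hres2 hc hbd hmu)
    x).differentiableAt.differentiableWithinAt

end ResolventEquations

theorem norm_smul_sub_le_of_perturbation {P : DA →ₗ[ℂ] H} {lam : ℂ} {x : DA} {y : H}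
    (hres : lam • (x : H) - (A x + P x) = y) {M : ℝ} (hP : ‖P x‖ ≤ M * ‖y‖) :
    ‖lam • (x : H) - A x‖ ≤ (1 + M) * ‖y‖ := by
  rw [show lam • (x : H) - A x = y + P x by linear_combination (norm := module) hres]
  grw [norm_add_le, hP]
  linarith

theorem norm_cRes_le {c M : ℝ} (hc : 0 ≤ c)
    (hC : ∀ x : DA, ‖C x‖ ≤ c * (‖(x : H)‖ + ‖A x‖))
    {lam : ℂ} (hlam : 0 < lam.re)
    (hA : ∀ y, ‖lam • R lam y - A ⟨R lam y, hmem lam hlam y⟩‖ ≤ M * ‖y‖) (y : H) :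
    ‖CRes DA C R hmem lam y‖ ≤ c * ((1 + ‖lam‖) * ‖R lam‖ + M) * ‖y‖ := by
  set x : DA := ⟨R lam y, hmem lam hlam y⟩
  have hx : ‖(x : H)‖ ≤ ‖R lam‖ * ‖y‖ := (R lam).le_opNorm y
  have hAx : ‖A x‖ ≤ ‖lam‖ * (‖R lam‖ * ‖y‖) + M * ‖y‖ := by
    calc ‖A x‖ = ‖lam • (x : H) - (lam • (x : H) - A x)‖ := by
          congr 1; abel
      _ ≤ ‖lam • (x : H)‖ + ‖lam • (x : H) - A x‖ := norm_sub_le _ _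
      _ ≤ ‖lam‖ * (‖R lam‖ * ‖y‖) + M * ‖y‖ := by
          rw [norm_smul]
          gcongr
          exact hA y
  calc ‖CRes DA C R hmem lam y‖ = ‖C x‖ := by rw [CRes, dif_pos hlam]
    _ ≤ c * (‖(x : H)‖ + ‖A x‖) := hC x
    _ ≤ c * ((1 + ‖lam‖) * ‖R lam‖ + M) * ‖y‖ := by
        rw [mul_assoc]
        gcongr
        linarith

theorem exists_continuousLinearMap_coe_eq_cRes {lam : ℂ} (hlam : 0 < lam.re) {K : ℝ}
    (hK : ∀ y, ‖CRes DA C R hmem lam y‖ ≤ K * ‖y‖) :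
    ∃ T : H →L[ℂ] Y, ⇑T = CRes DA C R hmem lam :=
  ⟨(C.comp ((R lam).toLinearMap.codRestrict DA (hmem lam hlam))).mkContinuous K
    fun y => (by simpa only [CRes, dif_pos hlam] using hK y :
      ‖C ⟨R lam y, hmem lam hlam y⟩‖ ≤ K * ‖y‖),
    by ext y; simp only [CRes, dif_pos hlam]; rfl⟩

end CRes

theorem hsNormSq_cRes_perturbed_le {H Y : Type*} [NormedAddCommGroup H] [InnerProductSpace ℂ H]
    [CompleteSpace H] [NormedAddCommGroup Y] [InnerProductSpace ℂ Y] [CompleteSpace Y]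
    (e : HilbertBasis ℕ ℂ H) {DA : Submodule ℂ H}
    {A P : DA →ₗ[ℂ] H} {C : DA →ₗ[ℂ] Y} {RA RAP : ℂ → H →L[ℂ] H}
    {hmemA : ∀ lam : ℂ, 0 < lam.re → ∀ x : H, RA lam x ∈ DA}
    {hmemAP : ∀ lam : ℂ, 0 < lam.re → ∀ x : H, RAP lam x ∈ DA}
    {lam : ℂ} (hlam : 0 < lam.re)
    (hresA2 : ∀ x : DA, RA lam (lam • (x : H) - A x) = (x : H))
    (hresAP : ∀ x : H, lam • RAP lam x -
      (A ⟨RAP lam x, hmemAP lam hlam x⟩ + P ⟨RAP lam x, hmemAP lam hlam x⟩) = x)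
    {M : ℝ} (hM : 0 ≤ M)
    (hP : ∀ x : H, ‖P ⟨RAP lam x, hmemAP lam hlam x⟩‖ ≤ M * ‖x‖)
    (T : H →L[ℂ] Y) (hT : ⇑T = CRes DA C RA hmemA lam) :
    hsNormSq e (CRes DA C RAP hmemAP lam)
      ≤ ENNReal.ofReal (1 + M) ^ 2 * hsNormSq e (CRes DA C RA hmemA lam) := by
  set B : H →L[ℂ] H :=
    1 + (P.comp ((RAP lam).toLinearMap.codRestrict DA (hmemAP lam hlam))).mkContinuous M hP
  have hfactor : CRes DA C RAP hmemAP lam = ⇑(T ∘L B) := by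
    ext x
    have hB : B x = x + P ⟨RAP lam x, hmemAP lam hlam x⟩ := rfl
    rw [ContinuousLinearMap.comp_apply, hB, hT, CRes, CRes, dif_pos hlam, dif_pos hlam]
    congr 1
    ext
    exact (resolvent_perturbation_apply hresA2 _ (hresAP x)).symm
  have hB : (‖B‖₊ : ℝ≥0∞) ≤ ENNReal.ofReal (1 + M) := by
    rw [← enorm_eq_nnnorm, ← ofReal_norm]
    refine ENNReal.ofReal_le_ofReal (B.opNorm_le_bound (by positivity) fun x => ?_)
    calc ‖x + P ⟨RAP lam x, hmemAP lam hlam x⟩‖ ≤ ‖x‖ + M * ‖x‖ := by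
          grw [norm_add_le, hP x]
      _ = (1 + M) * ‖x‖ := by ring
  rw [hfactor, ← hT]
  grw [hsNormSq_comp_le, hB]

theorem MemH2HS.of_hsNormSq_le_mul {H Y : Type*} [NormedAddCommGroup H]
    [InnerProductSpace ℂ H] [NormedAddCommGroup Y] [NormedSpace ℂ Y]
    {e : HilbertBasis ℕ ℂ H} {G G' : ℂ → H → Y} (hG : MemH2HS e G)
    (hdiff : ∀ x : H, DifferentiableOn ℂ (fun lam => G' lam x) {lam : ℂ | 0 < lam.re})
    {K : ℝ≥0∞} (hK : K ≠ ⊤)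
    (hle : ∀ lam : ℂ, 0 < lam.re → hsNormSq e (G' lam) ≤ K * hsNormSq e (G lam)) :
    MemH2HS e G' := by
  obtain ⟨-, M, hM, hGM⟩ := hG
  refine ⟨hdiff, K * M, ENNReal.mul_lt_top hK.lt_top hM, fun a ha => ?_⟩
  calc ∫⁻ b : ℝ, hsNormSq e (G' (a + b * Complex.I))
      ≤ ∫⁻ b : ℝ, K * hsNormSq e (G (a + b * Complex.I)) :=
        lintegral_mono fun b => hle _ (by simpa using ha)
    _ = K * ∫⁻ b : ℝ, hsNormSq e (G (a + b * Complex.I)) := lintegral_const_mul' _ _ hK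
    _ ≤ K * M := by gcongr; exact hGM a ha

theorem memH2HS_perturbed_resolvent_general
    {H Y : Type*} [NormedAddCommGroup H] [InnerProductSpace ℂ H] [CompleteSpace H]
    [NormedAddCommGroup Y] [InnerProductSpace ℂ Y] [CompleteSpace Y]
    (e : HilbertBasis ℕ ℂ H)
    (DA : Submodule ℂ H) (Agen : DA →ₗ[ℂ] H)
    (C : DA →ₗ[ℂ] Y)
    (hCbd : ∃ c : ℝ, ∀ x : DA, ‖C x‖ ≤ c * (‖(x : H)‖ + ‖Agen x‖))
    (P : DA →ₗ[ℂ] H)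
    -- the resolvent `R(λ,A)` on the right half-plane:
    (RA : ℂ → H →L[ℂ] H)
    (hmemA : ∀ lam : ℂ, 0 < lam.re → ∀ x : H, RA lam x ∈ DA)
    (hresA : ∀ (lam : ℂ) (h : 0 < lam.re) (x : H),
      lam • RA lam x - Agen ⟨RA lam x, hmemA lam h x⟩ = x)
    (hresA2 : ∀ lam : ℂ, 0 < lam.re → ∀ x : DA, RA lam (lam • (x : H) - Agen x) = (x : H))
    -- the resolvent `R(λ,A+P)` on the right half-plane:
    (RAP : ℂ → H →L[ℂ] H)
    (hmemAP : ∀ lam : ℂ, 0 < lam.re → ∀ x : H, RAP lam x ∈ DA)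
    (hresAP : ∀ (lam : ℂ) (h : 0 < lam.re) (x : H),
      lam • RAP lam x - (Agen ⟨RAP lam x, hmemAP lam h x⟩ + P ⟨RAP lam x, hmemAP lam h x⟩)
        = x)
    (hresAP2 : ∀ lam : ℂ, 0 < lam.re → ∀ x : DA,
      RAP lam (lam • (x : H) - (Agen x + P x)) = (x : H))
    -- `λ ↦ C R(λ,A)` belongs to `H²(L₂(H,Y))`:
    (hH2 : MemH2HS e (CRes DA C RA hmemA))
    -- `sup_{Re λ > 0} ‖P R(λ,A+P)‖ < ∞`:
    (hPRbdd : ∃ Mb : ℝ, ∀ (lam : ℂ) (h : 0 < lam.re) (x : H),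
      ‖P ⟨RAP lam x, hmemAP lam h x⟩‖ ≤ Mb * ‖x‖) :
    MemH2HS e (CRes DA C RAP hmemAP) := by
  obtain ⟨c, hc⟩ := hCbd
  obtain ⟨Mb, hMb⟩ := hPRbdd
  have hC : ∀ x : DA, ‖C x‖ ≤ |c| * (‖(x : H)‖ + ‖Agen x‖) :=
    fun x => (hc x).trans (by gcongr; exact le_abs_self c)
  have hP : ∀ (lam : ℂ) (h : 0 < lam.re) (x : H),
      ‖P ⟨RAP lam x, hmemAP lam h x⟩‖ ≤ |Mb| * ‖x‖ :=
    fun lam h x => (hMb lam h x).trans (by gcongr; exact le_abs_self Mb)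
  have hCRA : ∀ lam, 0 < lam.re → ∀ y,
      ‖CRes DA C RA hmemA lam y‖ ≤ |c| * ((1 + ‖lam‖) * ‖RA lam‖ + 1) * ‖y‖ :=
    fun lam h => norm_cRes_le (abs_nonneg c) hC h fun y => by rw [hresA lam h y, one_mul]
  have hCRAP : ∀ lam, 0 < lam.re → ∀ y,
      ‖CRes DA C RAP hmemAP lam y‖
        ≤ |c| * ((1 + ‖lam‖) * ‖RAP lam‖ + (1 + |Mb|)) * ‖y‖ :=
    fun lam h => norm_cRes_le (abs_nonneg c) hC h fun y =>
      norm_smul_sub_le_of_perturbation (hresAP lam h y) (hP lam h y)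
  refine hH2.of_hsNormSq_le_mul
    (differentiableOn_cRes (A := Agen + P) hresAP hresAP2 (abs_nonneg c) hCRAP)
    (K := ENNReal.ofReal (1 + |Mb|) ^ 2) (by finiteness) fun lam hlam => ?_
  obtain ⟨T, hT⟩ := exists_continuousLinearMap_coe_eq_cRes hlam (hCRA lam hlam)
  exact hsNormSq_cRes_perturbed_le e hlam (hresA2 lam hlam) (hresAP lam hlam) (abs_nonneg Mb)
    (hP lam hlam) T hT

/-- Let `A` generate an exponentially stable C0-semigroup `T` on `H`, let
`C ∈ L(D(A),Y)` and `P ∈ L(D(A),H)` be admissible observation operators for `A` such that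
`A+P` (domain `D(A)`) generates an exponentially stable C0-semigroup `S`.  If
`λ ↦ C R(λ,A)` belongs to `H²(L₂(H,Y))` and `sup_{Re λ>0} ‖P R(λ,A+P)‖ < ∞`, then
`λ ↦ C R(λ,A+P)` belongs to `H²(L₂(H,Y))` as well. -/
theorem memH2HS_perturbed_resolvent
    {H Y : Type*} [NormedAddCommGroup H] [InnerProductSpace ℂ H] [CompleteSpace H]
    [NormedAddCommGroup Y] [InnerProductSpace ℂ Y] [CompleteSpace Y]
    (e : HilbertBasis ℕ ℂ H)
    (T : ℝ → H →L[ℂ] H)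
    (hT0 : T 0 = 1)
    (hTsg : ∀ s t : ℝ, 0 ≤ s → 0 ≤ t → T (s + t) = (T s).comp (T t))
    (hTcont : ∀ x : H, ContinuousOn (fun t => T t x) (Ici (0:ℝ)))
    (DA : Submodule ℂ H) (Agen : DA →ₗ[ℂ] H)
    (hgen : ∀ x : DA,
      Tendsto (fun t : ℝ => (t : ℂ)⁻¹ • (T t x - (x : H))) (𝓝[>] 0) (𝓝 (Agen x)))
    (hTdom : ∀ t : ℝ, 0 ≤ t → ∀ x : H, x ∈ DA → T t x ∈ DA)
    -- exponential stability of `T`: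
    (hstabT : ∃ M ε : ℝ, 0 < ε ∧ ∀ t : ℝ, 0 ≤ t → ‖T t‖ ≤ M * Real.exp (-ε * t))
    (C : DA →ₗ[ℂ] Y)
    (hCbd : ∃ c : ℝ, ∀ x : DA, ‖C x‖ ≤ c * (‖(x : H)‖ + ‖Agen x‖))
    -- `C` is an admissible observation operator for `A`:
    (hCadm : ∃ α : ℝ, 0 < α ∧ ∃ γ : ℝ, ∀ x : DA,
      (∫ t in (0:ℝ)..α, ‖(if ht : (0:ℝ) ≤ t then
          C ⟨T t (x : H), hTdom t ht (x : H) x.2⟩ else 0)‖ ^ 2) ≤ γ ^ 2 * ‖(x : H)‖ ^ 2)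
    (P : DA →ₗ[ℂ] H)
    (hPbd : ∃ c : ℝ, ∀ x : DA, ‖P x‖ ≤ c * (‖(x : H)‖ + ‖Agen x‖))
    -- `P` is an admissible observation operator for `A`:
    (hPadm : ∃ α : ℝ, 0 < α ∧ ∃ γ : ℝ, ∀ x : DA,
      (∫ t in (0:ℝ)..α, ‖(if ht : (0:ℝ) ≤ t then
          P ⟨T t (x : H), hTdom t ht (x : H) x.2⟩ else 0)‖ ^ 2) ≤ γ ^ 2 * ‖(x : H)‖ ^ 2)
    -- the semigroup `S` generated by `A + P` (domain `D(A)`), exponentially stable: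
    (S : ℝ → H →L[ℂ] H)
    (hS0 : S 0 = 1)
    (hSsg : ∀ s t : ℝ, 0 ≤ s → 0 ≤ t → S (s + t) = (S s).comp (S t))
    (hScont : ∀ x : H, ContinuousOn (fun t => S t x) (Ici (0:ℝ)))
    (hSgen : ∀ x : DA,
      Tendsto (fun t : ℝ => (t : ℂ)⁻¹ • (S t x - (x : H))) (𝓝[>] 0) (𝓝 (Agen x + P x)))
    (hstabS : ∃ M ε : ℝ, 0 < ε ∧ ∀ t : ℝ, 0 ≤ t → ‖S t‖ ≤ M * Real.exp (-ε * t))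
    -- the resolvent `R(λ,A)` on the right half-plane:
    (RA : ℂ → H →L[ℂ] H)
    (hmemA : ∀ lam : ℂ, 0 < lam.re → ∀ x : H, RA lam x ∈ DA)
    (hresA : ∀ (lam : ℂ) (h : 0 < lam.re) (x : H),
      lam • RA lam x - Agen ⟨RA lam x, hmemA lam h x⟩ = x)
    (hresA2 : ∀ lam : ℂ, 0 < lam.re → ∀ x : DA, RA lam (lam • (x : H) - Agen x) = (x : H))
    -- the resolvent `R(λ,A+P)` on the right half-plane:
    (RAP : ℂ → H →L[ℂ] H)
    (hmemAP : ∀ lam : ℂ, 0 < lam.re → ∀ x : H, RAP lam x ∈ DA)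
    (hresAP : ∀ (lam : ℂ) (h : 0 < lam.re) (x : H),
      lam • RAP lam x - (Agen ⟨RAP lam x, hmemAP lam h x⟩ + P ⟨RAP lam x, hmemAP lam h x⟩)
        = x)
    (hresAP2 : ∀ lam : ℂ, 0 < lam.re → ∀ x : DA,
      RAP lam (lam • (x : H) - (Agen x + P x)) = (x : H))
    -- `λ ↦ C R(λ,A)` belongs to `H²(L₂(H,Y))`:
    (hH2 : MemH2HS e (CRes DA C RA hmemA))
    -- `sup_{Re λ > 0} ‖P R(λ,A+P)‖ < ∞`:
    (hPRbdd : ∃ Mb : ℝ, ∀ (lam : ℂ) (h : 0 < lam.re) (x : H),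
      ‖P ⟨RAP lam x, hmemAP lam h x⟩‖ ≤ Mb * ‖x‖) :
    MemH2HS e (CRes DA C RAP hmemAP) :=
  memH2HS_perturbed_resolvent_general e DA Agen C hCbd P RA hmemA hresA hresA2 RAP hmemAP hresAP
    hresAP2 hH2 hPRbdd
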